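/- In the linearized setting, for every f ∈ I one has, exactly in B: □(P̄(f)) = (1/r)·(−κκ̄ + 2ρ)·P̄(P̄(f)) + ((1/2)κκ̄ − 4ρ − 2ρF²)·P̄(f) + ((1/2)ρ + ρF²)·r·f + (3/2)·r·□f + r·κ̄⁻¹·e3(□f). -/
import Mathlib


/-!
Algebraic model of the linearized Einstein–Maxwell system around Reissner–Nordström.
`B = A[ε]/(ε²)` is modeled by the dual numbers `DualNumber A` over a commutative
`ℝ`-algebra `A`, and the square-zero ideal `I = ε·B` by `smallIdeal A`.
Equality "modulo O(ε²)" is exact equality in `B`; products of two elements of `I` vanish.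
-/

noncomputable section

open scoped DualNumber

/-- The square-zero ideal `I = ε·B` of the dual numbers `B = A[ε]/(ε²)`. -/
def smallIdeal (A : Type*) [CommRing A] : Ideal (DualNumber A) :=
  Ideal.span {(DualNumber.eps : DualNumber A)}

/-- The linearized setting: `ℝ`-linear derivations `e3, e4, eθ` on `B = DualNumber A`,
background elements `κ, κ̄, ω, ω̄, ρ, ρF, Z, r` (with `r` and `κ̄` invertible, inverses
`ir` and `iκ'`), the background transport relations modulo the square-zero ideal `I`,
and the commutator relations valid on every element of `I`. -/
structure RNSetting (A : Type*) [CommRing A] [Algebra ℝ A] where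
  e3 : Derivation ℝ (DualNumber A) (DualNumber A)
  e4 : Derivation ℝ (DualNumber A) (DualNumber A)
  eθ : Derivation ℝ (DualNumber A) (DualNumber A)
  κ : DualNumber A
  κ' : DualNumber A
  ω : DualNumber A
  ω' : DualNumber A
  ρ : DualNumber A
  ρF : DualNumber A
  Z : DualNumber A
  r : DualNumber A
  ir : DualNumber A
  iκ' : DualNumber A
  hr : r * ir = 1
  hκ' : κ' * iκ' = 1
  pres_e3 : ∀ x ∈ smallIdeal A, e3 x ∈ smallIdeal A
  pres_e4 : ∀ x ∈ smallIdeal A, e4 x ∈ smallIdeal A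
  pres_eθ : ∀ x ∈ smallIdeal A, eθ x ∈ smallIdeal A
  he3κ' : e3 κ' - (-((1/2 : ℝ) • (κ' * κ')) - 2 * ω' * κ') ∈ smallIdeal A
  he4κ' : e4 κ' - (-((1/2 : ℝ) • (κ * κ')) + 2 * ω * κ' + 2 * ρ) ∈ smallIdeal A
  he3κ : e3 κ - (-((1/2 : ℝ) • (κ * κ')) + 2 * ω' * κ + 2 * ρ) ∈ smallIdeal A
  he4κ : e4 κ - (-((1/2 : ℝ) • (κ * κ)) - 2 * ω * κ) ∈ smallIdeal A
  hωω' : e3 ω + e4 ω' - (ρ + ρF ^ 2) ∈ smallIdeal A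
  he3ρ : e3 ρ - (-((3/2 : ℝ) • (κ' * ρ)) - κ' * ρF ^ 2) ∈ smallIdeal A
  he4ρ : e4 ρ - (-((3/2 : ℝ) • (κ * ρ)) - κ * ρF ^ 2) ∈ smallIdeal A
  he3ρF : e3 ρF - (-(κ' * ρF)) ∈ smallIdeal A
  he4ρF : e4 ρF - (-(κ * ρF)) ∈ smallIdeal A
  he3r : e3 r - (1/2 : ℝ) • (r * κ') ∈ smallIdeal A
  he4r : e4 r - (1/2 : ℝ) • (r * κ) ∈ smallIdeal A
  he3Z : e3 Z - (-((1/2 : ℝ) • (κ' * Z))) ∈ smallIdeal A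
  he4Z : e4 Z - (-((1/2 : ℝ) • (κ * Z))) ∈ smallIdeal A
  heθZ : eθ Z - (ρ + (1/4 : ℝ) • (κ * κ') - ρF ^ 2 - Z ^ 2) ∈ smallIdeal A
  heθκ : eθ κ ∈ smallIdeal A
  heθκ' : eθ κ' ∈ smallIdeal A
  heθω : eθ ω ∈ smallIdeal A
  heθω' : eθ ω' ∈ smallIdeal A
  heθρ : eθ ρ ∈ smallIdeal A
  heθρF : eθ ρF ∈ smallIdeal A
  heθr : eθ r ∈ smallIdeal A
  commθ3 : ∀ x ∈ smallIdeal A, eθ (e3 x) - e3 (eθ x) = (1/2 : ℝ) • (κ' * eθ x)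
  commθ4 : ∀ x ∈ smallIdeal A, eθ (e4 x) - e4 (eθ x) = (1/2 : ℝ) • (κ * eθ x)
  comm34 : ∀ x ∈ smallIdeal A, e3 (e4 x) - e4 (e3 x) = 2 * ω' * e4 x - 2 * ω * e3 x

namespace RNSetting

variable {A : Type*} [CommRing A] [Algebra ℝ A]

/-- The wave operator
`□u = −e4(e3 u) + eθ(eθ u) − (1/2)κ̄·e4(u) + (−(1/2)κ + 2ω)·e3(u) + Z·eθ(u)`. -/
def box (S : RNSetting A) (u : DualNumber A) : DualNumber A :=
  -S.e4 (S.e3 u) + S.eθ (S.eθ u) - (1/2 : ℝ) • (S.κ' * S.e4 u)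
    + (-((1/2 : ℝ) • S.κ) + 2 * S.ω) * S.e3 u + S.Z * S.eθ u

/-- The operator `P̄(u) = r·κ̄⁻¹·e3(u) + (1/2)·r·u`. -/
def Pb (S : RNSetting A) (u : DualNumber A) : DualNumber A :=
  S.r * S.iκ' * S.e3 u + (1/2 : ℝ) • (S.r * u)

/-- The operator `Q(u) = r·κ̄·e4(u) + (1/2)·r·κ·κ̄·u`. -/
def Qop (S : RNSetting A) (u : DualNumber A) : DualNumber A :=
  S.r * S.κ' * S.e4 u + (1/2 : ℝ) • (S.r * S.κ * S.κ' * u)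




/-- `1/2` as an element of `B`. -/
def half (A : Type*) [CommRing A] [Algebra ℝ A] : DualNumber A :=
  algebraMap ℝ (DualNumber A) (1/2)

lemma half_smul (x : DualNumber A) : (1/2 : ℝ) • x = half A * x :=
  Algebra.smul_def _ _

lemma threehalf_smul (x : DualNumber A) : (3/2 : ℝ) • x = 3 * (half A * x) := by
  rw [show (3/2 : ℝ) = (3:ℝ) * (1/2) by norm_num, mul_smul, half_smul, Algebra.smul_def,
    map_ofNat]

lemma two_half : (2 : DualNumber A) * half A = 1 := by
  rw [show (2 : DualNumber A) = algebraMap ℝ (DualNumber A) 2 from (map_ofNat _ _).symm]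
  simp only [half]
  rw [← map_mul, show (2:ℝ) * (1/2) = 1 by norm_num, map_one]

lemma D_half (D : Derivation ℝ (DualNumber A) (DualNumber A)) : D (half A) = 0 := by
  simp only [half, Derivation.map_algebraMap]

lemma D_two (D : Derivation ℝ (DualNumber A) (DualNumber A)) : D (2 : DualNumber A) = 0 := by
  rw [show (2 : DualNumber A) = ((2:ℕ) : DualNumber A) by norm_cast]
  exact D.map_natCast 2

lemma mulI {x y : DualNumber A} (hx : x ∈ smallIdeal A) (hy : y ∈ smallIdeal A) :
    x * y = 0 := by
  obtain ⟨a, ha⟩ := Ideal.mem_span_singleton'.mp hx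
  obtain ⟨b, hb⟩ := Ideal.mem_span_singleton'.mp hy
  rw [← ha, ← hb, show a * DualNumber.eps * (b * DualNumber.eps)
      = a * b * (DualNumber.eps * DualNumber.eps) by ring,
    DualNumber.eps_mul_eps, mul_zero]

lemma subsI {a b g : DualNumber A} (h : a - b ∈ smallIdeal A) (hg : g ∈ smallIdeal A) :
    a * g = b * g := by
  have h0 := mulI h hg
  linear_combination h0


set_option maxHeartbeats 4000000 in
/-- the wave operator applied to `P̄(f)` for `f ∈ I`. -/
theorem box_Pb (S : RNSetting A) (f : DualNumber A) (hf : f ∈ smallIdeal A) :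
    S.box (S.Pb f)
      = S.ir * (-(S.κ * S.κ') + 2 * S.ρ) * S.Pb (S.Pb f)
        + ((1/2 : ℝ) • (S.κ * S.κ') - 4 * S.ρ - 2 * S.ρF ^ 2) * S.Pb f
        + ((1/2 : ℝ) • S.ρ + S.ρF ^ 2) * (S.r * f)
        + (3/2 : ℝ) • (S.r * S.box f)
        + S.r * S.iκ' * S.e3 (S.box f) := by

  -- memberships of the jets of f
  have mem_f := hf
  have mem_3f : S.e3 (f) ∈ smallIdeal A := S.pres_e3 _ hf
  have mem_4f : S.e4 (f) ∈ smallIdeal A := S.pres_e4 _ hf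
  have mem_tf : S.eθ (f) ∈ smallIdeal A := S.pres_eθ _ hf
  have mem_33f : S.e3 (S.e3 (f)) ∈ smallIdeal A := S.pres_e3 _ mem_3f
  have mem_43f : S.e4 (S.e3 (f)) ∈ smallIdeal A := S.pres_e4 _ mem_3f
  have mem_3tf : S.e3 (S.eθ (f)) ∈ smallIdeal A := S.pres_e3 _ mem_tf
  -- hypotheses with ℝ-scalars replaced by `half A`
  have He3kp : S.e3 S.κ' - (-(half A * (S.κ' * S.κ')) - 2 * S.ω' * S.κ') ∈ smallIdeal A := by
    have h0 := S.he3κ'; rwa [half_smul] at h0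
  have He4kp : S.e4 S.κ' - (-(half A * (S.κ * S.κ')) + 2 * S.ω * S.κ' + 2 * S.ρ) ∈ smallIdeal A := by
    have h0 := S.he4κ'; rwa [half_smul] at h0
  have He3k : S.e3 S.κ - (-(half A * (S.κ * S.κ')) + 2 * S.ω' * S.κ + 2 * S.ρ) ∈ smallIdeal A := by
    have h0 := S.he3κ; rwa [half_smul] at h0
  have He4k : S.e4 S.κ - (-(half A * (S.κ * S.κ)) - 2 * S.ω * S.κ) ∈ smallIdeal A := by
    have h0 := S.he4κ; rwa [half_smul] at h0
  have He3o : S.e3 S.ρ - (-(3 * (half A * (S.κ' * S.ρ))) - S.κ' * S.ρF ^ 2) ∈ smallIdeal A := by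
    have h0 := S.he3ρ; rwa [threehalf_smul] at h0
  have He4o : S.e4 S.ρ - (-(3 * (half A * (S.κ * S.ρ))) - S.κ * S.ρF ^ 2) ∈ smallIdeal A := by
    have h0 := S.he4ρ; rwa [threehalf_smul] at h0
  have He3q := S.he3ρF
  have He4q := S.he4ρF
  have He3r : S.e3 S.r - half A * (S.r * S.κ') ∈ smallIdeal A := by
    have h0 := S.he3r; rwa [half_smul] at h0
  have He4r : S.e4 S.r - half A * (S.r * S.κ) ∈ smallIdeal A := by
    have h0 := S.he4r; rwa [half_smul] at h0
  have He3Z : S.e3 S.Z - (-(half A * (S.κ' * S.Z))) ∈ smallIdeal A := by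
    have h0 := S.he3Z; rwa [half_smul] at h0
  have He4Z : S.e4 S.Z - (-(half A * (S.κ * S.Z))) ∈ smallIdeal A := by
    have h0 := S.he4Z; rwa [half_smul] at h0
  have Hoo := S.hωω'
  -- derivatives of the inverse iκ'
  have hinv3 := S.e3.leibniz S.κ' S.iκ'
  rw [S.hκ', Derivation.map_one_eq_zero] at hinv3
  simp only [smul_eq_mul] at hinv3
  have d3jp : S.e3 S.iκ' = -(S.iκ' * S.iκ') * S.e3 S.κ' := by
    linear_combination (-S.iκ') * hinv3 - S.e3 S.iκ' * S.hκ'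
  have hinv4 := S.e4.leibniz S.κ' S.iκ'
  rw [S.hκ', Derivation.map_one_eq_zero] at hinv4
  simp only [smul_eq_mul] at hinv4
  have d4jp : S.e4 S.iκ' = -(S.iκ' * S.iκ') * S.e4 S.κ' := by
    linear_combination (-S.iκ') * hinv4 - S.e4 S.iκ' * S.hκ'
  have hinvt := S.eθ.leibniz S.κ' S.iκ'
  rw [S.hκ', Derivation.map_one_eq_zero] at hinvt
  simp only [smul_eq_mul] at hinvt
  have dtjp : S.eθ S.iκ' = -(S.iκ' * S.iκ') * S.eθ S.κ' := by
    linear_combination (-S.iκ') * hinvt - S.eθ S.iκ' * S.hκ'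
  have mem_tjp : S.eθ S.iκ' ∈ smallIdeal A := by
    rw [dtjp]; exact Ideal.mul_mem_left _ _ S.heθκ'
  have e43jp := congrArg S.e4 d3jp
  simp only [Derivation.leibniz, Derivation.map_smul, map_add, map_sub, map_neg, smul_eq_mul, D_half, D_two, half_smul, threehalf_smul, map_zero, mul_zero, zero_mul, add_zero, zero_add, neg_zero, smul_zero, zero_smul] at e43jp
  have ettjp := congrArg S.eθ dtjp
  simp only [Derivation.leibniz, Derivation.map_smul, map_add, map_sub, map_neg, smul_eq_mul, D_half, D_two, half_smul, threehalf_smul, map_zero, mul_zero, zero_mul, add_zero, zero_add, neg_zero, smul_zero, zero_smul] at ettjp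
  -- second-order background derivatives
  have mem43r : S.e4 (S.e3 S.r) - S.e4 (half A * (S.r * S.κ')) ∈ smallIdeal A := by
    rw [← map_sub]; exact S.pres_e4 _ He3r
  have mem43p : S.e4 (S.e3 S.κ') - S.e4 (-(half A * (S.κ' * S.κ')) - 2 * S.ω' * S.κ') ∈ smallIdeal A := by
    rw [← map_sub]; exact S.pres_e4 _ He3kp
  have mem34p : S.e3 (S.e4 S.κ') - S.e3 (-(half A * (S.κ * S.κ')) + 2 * S.ω * S.κ' + 2 * S.ρ) ∈ smallIdeal A := by
    rw [← map_sub]; exact S.pres_e3 _ He4kp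
  have exY43r : S.e4 (half A * (S.r * S.κ')) = (1 : DualNumber A)*(S.e4 (S.κ'))*(half A)*(S.r) + (1 : DualNumber A)*(S.e4 (S.r))*(half A)*(S.κ') := by
    simp only [Derivation.leibniz, Derivation.map_smul, map_add, map_sub, map_neg, smul_eq_mul, D_half, D_two, half_smul, threehalf_smul, map_zero, mul_zero, zero_mul, add_zero, zero_add, neg_zero, smul_zero, zero_smul]; ring
  have exY43p : S.e4 (-(half A * (S.κ' * S.κ')) - 2 * S.ω' * S.κ') = (-2 : DualNumber A)*(S.e4 (S.κ'))*(half A)*(S.κ') + (-2 : DualNumber A)*(S.e4 (S.κ'))*(S.ω') + (-2 : DualNumber A)*(S.e4 (S.ω'))*(S.κ') := by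
    simp only [Derivation.leibniz, Derivation.map_smul, map_add, map_sub, map_neg, smul_eq_mul, D_half, D_two, half_smul, threehalf_smul, map_zero, mul_zero, zero_mul, add_zero, zero_add, neg_zero, smul_zero, zero_smul]; ring
  have exY34p : S.e3 (-(half A * (S.κ * S.κ')) + 2 * S.ω * S.κ' + 2 * S.ρ) = (-1 : DualNumber A)*(S.e3 (S.κ))*(half A)*(S.κ') + (2 : DualNumber A)*(S.e3 (S.ρ)) + (-1 : DualNumber A)*(S.e3 (S.κ'))*(half A)*(S.κ) + (2 : DualNumber A)*(S.e3 (S.κ'))*(S.ω) + (2 : DualNumber A)*(S.e3 (S.ω))*(S.κ') := by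
    simp only [Derivation.leibniz, Derivation.map_smul, map_add, map_sub, map_neg, smul_eq_mul, D_half, D_two, half_smul, threehalf_smul, map_zero, mul_zero, zero_mul, add_zero, zero_add, neg_zero, smul_zero, zero_smul]; ring
  -- commutators
  have HcommA : S.eθ (S.e3 f) = S.e3 (S.eθ f) + half A * (S.κ' * S.eθ f) := by
    have h0 := S.commθ3 f hf; rw [half_smul] at h0; linear_combination h0
  have HcommB : S.eθ (S.e3 (S.eθ f)) = S.e3 (S.eθ (S.eθ f)) + half A * (S.κ' * S.eθ (S.eθ f)) := by
    have h0 := S.commθ3 _ mem_tf; rw [half_smul] at h0; linear_combination h0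
  have cA := congrArg S.eθ HcommA
  simp only [Derivation.leibniz, Derivation.map_smul, map_add, map_sub, map_neg, smul_eq_mul, D_half, D_two, half_smul, threehalf_smul, map_zero, mul_zero, zero_mul, add_zero, zero_add, neg_zero, smul_zero, zero_smul] at cA
  have c343 := S.comm34 _ mem_3f
  have c34 := S.comm34 f hf
  -- the key constraint: ω ω' kills the ideal
  have mem_p3f : S.κ' * S.e3 f ∈ smallIdeal A := Ideal.mul_mem_left _ _ mem_3f
  have c1 := S.comm34 _ mem_p3f
  simp only [Derivation.leibniz, Derivation.map_smul, map_add, map_sub, map_neg, smul_eq_mul, D_half, D_two, half_smul, threehalf_smul, map_zero, mul_zero, zero_mul, add_zero, zero_add, neg_zero, smul_zero, zero_smul] at c1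
  have hpw : S.κ' * S.ω * S.ω' * S.e3 f = 0 := by
    linear_combination ((-1 : DualNumber A)*(half A)*(half A)*(half A)*(half A)*(S.κ')) * (subsI He3k mem_3f) + ((-1 : DualNumber A)*(half A)*(half A)*(half A)*(half A)*(S.κ) + (4 : DualNumber A)*(half A)*(half A)*(half A)*(S.ω)) * (subsI He3kp mem_3f) + ((2 : DualNumber A)*(half A)*(half A)*(half A)) * (subsI He3o mem_3f) + ((2 : DualNumber A)*(half A)*(half A)*(half A)*(half A)*(S.κ')) * (subsI He4kp mem_3f) + ((2 : DualNumber A)*(half A)*(half A)*(half A)*(S.κ')) * (subsI Hoo mem_3f) + ((1 : DualNumber A)*(half A)*(half A)*(half A)) * (subsI mem34p mem_3f) + ((-1 : DualNumber A)*(half A)*(half A)*(half A)) * (subsI mem43p mem_3f) + ((-2 : DualNumber A)*(S.e3 (f))*(half A)*(half A)*(half A)*(S.ρ)*(S.κ') + (-4 : DualNumber A)*(S.e3 (f))*(half A)*(half A)*(S.κ')*(S.ω')*(S.ω) + (-2 : DualNumber A)*(S.e3 (f))*(half A)*(S.κ')*(S.ω')*(S.ω) + (-1 : DualNumber A)*(S.e3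 (f))*(S.κ')*(S.ω')*(S.ω)) * (two_half (A := A)) + ((-1 : DualNumber A)*(half A)*(half A)*(half A)) * c1 + ((1 : DualNumber A)*(half A)*(half A)*(half A)*(S.κ')) * c343 + ((1 : DualNumber A)*(S.e3 (f))*(half A)*(half A)*(half A)) * exY34p + ((-1 : DualNumber A)*(S.e3 (f))*(half A)*(half A)*(half A)) * exY43p
  have hw : S.ω * S.ω' * S.e3 f = 0 := by
    linear_combination S.iκ' * hpw - S.ω * S.ω' * S.e3 f * S.hκ'
  -- main computation
  simp only [RNSetting.box, RNSetting.Pb, Derivation.leibniz, Derivation.map_smul, map_add, map_sub, map_neg, smul_eq_mul, D_half, D_two, half_smul, threehalf_smul, map_zero, mul_zero, zero_mul, add_zero, zero_add, neg_zero, smul_zero, zero_smul]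
  linear_combination ((1 : DualNumber A)*(S.iκ')) * (mulI (S.pres_eθ _ S.heθr) mem_3f) + ((1 : DualNumber A)*(half A)) * (mulI (S.pres_eθ _ S.heθr) mem_f) + ((-1 : DualNumber A)*(S.iκ')*(S.iκ')*(S.r)) * (mulI (S.pres_eθ _ S.heθκ') mem_3f) + ((1 : DualNumber A)*(S.iκ')*(S.Z)) * (mulI S.heθr mem_3f) + ((2 : DualNumber A)*(S.iκ')) * (mulI S.heθr mem_3tf) + ((1 : DualNumber A)*(half A)*(S.Z)) * (mulI S.heθr mem_f) + ((2 : DualNumber A)*(half A) + (2 : DualNumber A)*(half A)*(S.iκ')*(S.κ')) * (mulI S.heθr mem_tf) + ((1 : DualNumber A)*(half A)*(S.iκ')*(S.r)) * (mulI S.heθκ' mem_tf) + ((-2 : DualNumber A)*(S.iκ')*(S.r)*(S.eθ (S.κ')) + (1 : DualNumber A)*(S.r)*(S.Z) + (2 : DualNumber A)*(S.eθ (S.r))) * (mulI mem_tjp mem_3f) + ((2 : DualNumber A)*(S.r)) * (mulI mem_tjp mem_3tf) + ((2 : DualNumber A)*(half A)*(S.κ')*(S.r)) * (mulI mem_tjp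 mem_tf) + ((-1 : DualNumber A)*(S.iκ')*(S.r)) * (subsI He3Z mem_tf) + ((1 : DualNumber A)*(half A)*(S.iκ')*(S.r)) * (subsI He3k mem_3f) + ((-2 : DualNumber A)*(S.e4 (S.κ'))*(S.iκ')*(S.iκ')*(S.iκ')*(S.r) + (1 : DualNumber A)*(S.e4 (S.r))*(S.iκ')*(S.iκ') + (1 : DualNumber A)*(half A)*(S.iκ')*(S.iκ')*(S.κ)*(S.r) + (-1 : DualNumber A)*(S.iκ')*(S.iκ')*(S.iκ')*(S.ir)*(S.κ)*(S.κ')*(S.r)*(S.r) + (2 : DualNumber A)*(S.iκ')*(S.iκ')*(S.iκ')*(S.ir)*(S.ρ)*(S.r)*(S.r) + (-2 : DualNumber A)*(S.iκ')*(S.iκ')*(S.r)*(S.ω)) * (subsI He3kp mem_3f) + ((1 : DualNumber A)*(S.iκ')*(S.iκ')*(S.r)) * (subsI He3kp mem_43f) + ((1 : DualNumber A)*(half A)*(S.iκ')*(S.r)) * (subsI He3kp mem_4f) + ((1 : DualNumber A)*(S.e4 (S.κ'))*(S.iκ')*(S.iκ') + (-1 : DualNumber A)*(half A)*(S.iκ')*(S.κ)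 + (1 : DualNumber A)*(S.iκ')*(S.iκ')*(S.ir)*(S.κ)*(S.κ')*(S.r) + (-2 : DualNumber A)*(S.iκ')*(S.iκ')*(S.ir)*(S.ρ)*(S.r) + (2 : DualNumber A)*(S.iκ')*(S.ω)) * (subsI He3r mem_3f) + ((-1 : DualNumber A)*(S.iκ')) * (subsI He3r mem_43f) + ((-1 : DualNumber A)*(half A)) * (subsI He3r mem_4f) + ((-1 : DualNumber A)*(half A)*(half A)*(S.κ) + (1 : DualNumber A)*(half A)*(S.iκ')*(S.ir)*(S.κ)*(S.κ')*(S.r) + (-2 : DualNumber A)*(half A)*(S.iκ')*(S.ir)*(S.ρ)*(S.r) + (2 : DualNumber A)*(half A)*(S.ω)) * (subsI He3r mem_f) + ((1 : DualNumber A)*(S.iκ')*(S.iκ')*(S.r)) * (subsI He4kp mem_33f) + ((2 : DualNumber A)*(half A)*(S.iκ')*(S.iκ')*(S.iκ')*(S.κ')*(S.κ')*(S.r) + (-1 : DualNumber A)*(half A)*(S.iκ')*(S.r) + (4 : DualNumber A)*(S.iκ')*(S.iκ')*(S.iκ')*(S.κ')*(S.r)*(S.ω') + (-2 : DualNumber A)*(S.iκ')*(S.iκ')*(S.r)*(S.ω'))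 * (subsI He4kp mem_3f) + ((-1 : DualNumber A)*(half A)*(half A)*(S.r)) * (subsI He4kp mem_f) + ((-1 : DualNumber A)*(S.iκ')) * (subsI He4r mem_33f) + ((-1 : DualNumber A)*(half A) + (-1 : DualNumber A)*(half A)*(S.iκ')*(S.iκ')*(S.κ')*(S.κ') + (-2 : DualNumber A)*(half A)*(S.iκ')*(S.κ') + (-2 : DualNumber A)*(S.iκ')*(S.iκ')*(S.κ')*(S.ω')) * (subsI He4r mem_3f) + ((-2 : DualNumber A)*(half A)*(half A)*(S.κ')) * (subsI He4r mem_f) + ((-2 : DualNumber A)*(S.iκ')*(S.iκ')*(S.κ')*(S.r)) * (subsI Hoo mem_3f) + ((1 : DualNumber A)*(S.iκ')*(S.iκ')*(S.r)) * (subsI mem43p mem_3f) + ((-1 : DualNumber A)*(S.iκ')) * (subsI mem43r mem_3f) + ((-1 : DualNumber A)*(half A)) * (subsI mem43r mem_f) + ((-1 : DualNumber A)*(S.e3 (S.e3 (f)))*(S.iκ')*(S.κ)*(S.r) + (-3 : DualNumber A)*(S.e3 (f))*(half A)*(S.κ)*(S.r) + (-2 : DualNumber A)*(S.e3 (f))*(S.iκ')*(S.κ)*(S.r)*(S.ω')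 + (-2 : DualNumber A)*(S.e3 (f))*(S.iκ')*(S.ρ)*(S.r) + (-1 : DualNumber A)*(f)*(half A)*(half A)*(S.κ)*(S.κ')*(S.r) + (-3 : DualNumber A)*(f)*(half A)*(S.ρ)*(S.r) + (1 : DualNumber A)*(f)*(S.ρF)*(S.ρF)*(S.r)) * (two_half (A := A)) + ((1 : DualNumber A)*(S.iκ')*(S.r)*(S.Z) + (2 : DualNumber A)*(S.iκ')*(S.eθ (S.r)) + (2 : DualNumber A)*(S.r)*(S.eθ (S.iκ'))) * HcommA + ((1 : DualNumber A)*(S.iκ')*(S.r)) * HcommB + ((-2 : DualNumber A)*(S.e3 (S.e3 (f)))*(S.iκ')*(S.iκ')*(S.ρ)*(S.r) + (1 : DualNumber A)*(S.e3 (S.e3 (f)))*(S.iκ')*(S.κ)*(S.r) + (-8 : DualNumber A)*(S.e3 (f))*(half A)*(S.iκ')*(S.ρ)*(S.r) + (4 : DualNumber A)*(S.e3 (f))*(half A)*(S.κ)*(S.r) + (-4 : DualNumber A)*(S.e3 (f))*(S.iκ')*(S.iκ')*(S.ρ)*(S.r)*(S.ω') + (2 : DualNumber A)*(S.e3 (f))*(S.iκ')*(S.κ)*(S.r)*(S.ω')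 + (2 : DualNumber A)*(f)*(half A)*(half A)*(S.κ)*(S.κ')*(S.r) + (-4 : DualNumber A)*(f)*(half A)*(half A)*(S.ρ)*(S.r)) * S.hr + ((-1 : DualNumber A)*(S.e3 (S.e3 (f)))*(half A)*(S.iκ')*(S.κ)*(S.r) + (1 : DualNumber A)*(S.e3 (S.e3 (f)))*(S.iκ')*(S.ir)*(S.κ)*(S.r)*(S.r) + (2 : DualNumber A)*(S.e3 (S.e3 (f)))*(S.iκ')*(S.r)*(S.ω) + (2 : DualNumber A)*(S.e3 (f))*(S.e3 (S.ω))*(S.iκ')*(S.r) + (-2 : DualNumber A)*(S.e3 (f))*(half A)*(half A)*(S.iκ')*(S.iκ')*(S.κ)*(S.κ')*(S.κ')*(S.r) + (-4 : DualNumber A)*(S.e3 (f))*(half A)*(half A)*(S.iκ')*(S.κ)*(S.κ')*(S.r) + (-7 : DualNumber A)*(S.e3 (f))*(half A)*(half A)*(S.κ)*(S.r) + (1 : DualNumber A)*(S.e3 (f))*(half A)*(S.iκ')*(S.iκ')*(S.ir)*(S.κ)*(S.κ')*(S.κ')*(S.r)*(S.r) + (-2 : DualNumber A)*(S.e3 (f))*(half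 A)*(S.iκ')*(S.iκ')*(S.ir)*(S.ρ)*(S.κ')*(S.r)*(S.r) + (-4 : DualNumber A)*(S.e3 (f))*(half A)*(S.iκ')*(S.iκ')*(S.κ)*(S.κ')*(S.r)*(S.ω') + (4 : DualNumber A)*(S.e3 (f))*(half A)*(S.iκ')*(S.iκ')*(S.ρ)*(S.κ')*(S.r) + (4 : DualNumber A)*(S.e3 (f))*(half A)*(S.iκ')*(S.iκ')*(S.κ')*(S.κ')*(S.r)*(S.ω) + (2 : DualNumber A)*(S.e3 (f))*(half A)*(S.iκ')*(S.ir)*(S.κ)*(S.κ')*(S.r)*(S.r) + (-4 : DualNumber A)*(S.e3 (f))*(half A)*(S.iκ')*(S.ir)*(S.ρ)*(S.r)*(S.r) + (-6 : DualNumber A)*(S.e3 (f))*(half A)*(S.iκ')*(S.κ)*(S.r)*(S.ω') + (4 : DualNumber A)*(S.e3 (f))*(half A)*(S.iκ')*(S.ρ)*(S.r) + (6 : DualNumber A)*(S.e3 (f))*(half A)*(S.iκ')*(S.κ')*(S.r)*(S.ω) + (4 : DualNumber A)*(S.e3 (f))*(half A)*(S.ir)*(S.κ)*(S.r)*(S.r)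 + (-1 : DualNumber A)*(S.e3 (f))*(half A)*(S.κ)*(S.r) + (4 : DualNumber A)*(S.e3 (f))*(half A)*(S.r)*(S.ω) + (2 : DualNumber A)*(S.e3 (f))*(S.iκ')*(S.iκ')*(S.ir)*(S.κ)*(S.κ')*(S.r)*(S.r)*(S.ω') + (-4 : DualNumber A)*(S.e3 (f))*(S.iκ')*(S.iκ')*(S.ir)*(S.ρ)*(S.r)*(S.r)*(S.ω') + (8 : DualNumber A)*(S.e3 (f))*(S.iκ')*(S.iκ')*(S.ρ)*(S.r)*(S.ω') + (8 : DualNumber A)*(S.e3 (f))*(S.iκ')*(S.iκ')*(S.κ')*(S.r)*(S.ω')*(S.ω) + (2 : DualNumber A)*(S.e3 (f))*(S.iκ')*(S.ir)*(S.κ)*(S.r)*(S.r)*(S.ω') + (-2 : DualNumber A)*(S.e3 (f))*(S.iκ')*(S.ρ)*(S.r) + (-2 : DualNumber A)*(S.e3 (f))*(S.iκ')*(S.ρF)*(S.ρF)*(S.r) + (8 : DualNumber A)*(S.e3 (f))*(S.iκ')*(S.r)*(S.ω')*(S.ω) + (-1 : DualNumber A)*(S.e4 (S.e3 (f)))*(half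 A)*(S.iκ')*(S.κ')*(S.r) + (-2 : DualNumber A)*(S.e4 (S.e3 (f)))*(half A)*(S.r) + (-2 : DualNumber A)*(S.e4 (S.e3 (f)))*(S.iκ')*(S.r)*(S.ω') + (-1 : DualNumber A)*(S.e4 (f))*(half A)*(half A)*(S.κ')*(S.r) + (1 : DualNumber A)*(f)*(half A)*(half A)*(S.ir)*(S.κ)*(S.κ')*(S.r)*(S.r) + (-2 : DualNumber A)*(f)*(half A)*(half A)*(S.ir)*(S.ρ)*(S.r)*(S.r) + (2 : DualNumber A)*(half A)*(S.r)*(S.eθ (f))*(S.Z) + (2 : DualNumber A)*(half A)*(S.r)*(S.eθ (S.eθ (f)))) * S.hκ' + ((1 : DualNumber A)*(half A)*(S.iκ')*(S.κ')*(S.r)) * c34 + ((1 : DualNumber A)*(S.iκ')*(S.r)) * c343 + ((1 : DualNumber A)*(S.iκ')*(S.r)) * cA + ((-1 : DualNumber A)*(S.e3 (f))*(S.e4 (S.r)) + (-1 : DualNumber A)*(S.e3 (f))*(half A)*(S.κ)*(S.r) + (1 : DualNumber A)*(S.e3 (f))*(S.iκ')*(S.ir)*(S.κ)*(S.κ')*(S.r)*(S.r)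 + (-2 : DualNumber A)*(S.e3 (f))*(S.iκ')*(S.ir)*(S.ρ)*(S.r)*(S.r) + (2 : DualNumber A)*(S.e3 (f))*(S.r)*(S.ω) + (-1 : DualNumber A)*(S.e4 (S.e3 (f)))*(S.r)) * d3jp + ((-1 : DualNumber A)*(S.e3 (S.e3 (f)))*(S.r) + (2 : DualNumber A)*(S.e3 (f))*(S.e3 (S.κ'))*(S.iκ')*(S.r) + (-1 : DualNumber A)*(S.e3 (f))*(S.e3 (S.r)) + (-1 : DualNumber A)*(S.e3 (f))*(half A)*(S.κ')*(S.r)) * d4jp + ((-1 : DualNumber A)*(S.e3 (f))*(S.r)) * e43jp + ((1 : DualNumber A)*(S.e3 (f))*(S.r)) * ettjp + ((1 : DualNumber A)*(S.e3 (f))*(S.iκ')*(S.iκ')*(S.r)) * exY43p + ((-1 : DualNumber A)*(S.e3 (f))*(S.iκ') + (-1 : DualNumber A)*(f)*(half A)) * exY43r + ((8 : DualNumber A)*(S.iκ')*(S.r)) * hw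


end RNSetting
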